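/- Fix integers m ≥ 3 and let L ≥ 1 be the unique integer with 2^{L+1} - 1 ≤ m ≤ 2^{L+2} - 2. Consider the directed graph G on vertex set ℤ/mℤ with edges from each vertex j to 2j+1 mod m and to 2j+2 mod m. Then: (a) every closed walk from vertex 0 back to vertex 0 that does not visit 0 in between has length at least L+1; and (b) for every integer l ≥ L+1 there exists a closed walk from 0 to 0 of length l that does not visit 0 in between. -/

import Mathlib

/-!
In the coordinate `x = j + 1` the edges become `x ↦ 2x` and `x ↦ 2x + 1`, so a walk of
length `l` from `0` reads off, digit by digit, a binary numeral `x ∈ [2 ^ l, 2 ^ (l + 1))`,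
passing through `p - 1` for the successive leading parts `p` of `x`. Returning to `0` forces
`x ≡ 1 [MOD m]` with `x > 1`, so `m + 2 ≤ 2 ^ (l + 1)`, i.e. `l > L`. Conversely, for `l > L`
some `x = m * 2 ^ r + 1` lies in that range, and each proper leading part of it is a multiple
of `m` or lies in `[2, m)`, so the walk does not pass through `0` in between.
-/

/-- Edge relation of the digraph on `ZMod m`: `j → 2j+1` and `j → 2j+2`. -/
def GStep (m : ℕ) (a b : ZMod m) : Prop := b = 2 * a + 1 ∨ b = 2 * a + 2

namespace GStep

variable {m : ℕ}

theorem natCast_div_two_sub_one (p : ℕ) :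
    GStep m ((p / 2 : ℕ) - 1) ((p : ZMod m) - 1) := by
  rcases Nat.even_or_odd' p with ⟨q, rfl | rfl⟩
  · left; rw [show 2 * q / 2 = q by omega]; push_cast; ring
  · right; rw [show (2 * q + 1) / 2 = q by omega]; push_cast; ring

theorem exists_natCast_sub_one_of_walk {l : ℕ} {w : ℕ → ZMod m} (h0 : w 0 = 0)
    (hw : ∀ i < l, GStep m (w i) (w (i + 1))) :
    ∃ x : ℕ, 2 ^ l ≤ x ∧ x < 2 ^ (l + 1) ∧ w l = (x : ZMod m) - 1 := by
  induction l with
  | zero => exact ⟨1, le_rfl, by norm_num, by simp [h0]⟩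
  | succ l ih =>
    obtain ⟨x, hx1, hx2, hwx⟩ := ih fun i hi => hw i (by omega)
    have hpow : 2 ^ (l + 2) = 2 * 2 ^ (l + 1) := by ring
    rcases hw l (by omega) with h | h
    · exact ⟨2 * x, by rw [pow_succ]; omega, by omega, by rw [h, hwx]; push_cast; ring⟩
    · exact ⟨2 * x + 1, by rw [pow_succ]; omega, by omega, by rw [h, hwx]; push_cast; ring⟩

theorem add_two_le_two_pow_of_closed_walk {l : ℕ} {w : ℕ → ZMod m} (hl : 1 ≤ l)
    (h0 : w 0 = 0) (hl0 : w l = 0) (hw : ∀ i < l, GStep m (w i) (w (i + 1))) :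
    m + 2 ≤ 2 ^ (l + 1) := by
  obtain ⟨x, hx1, hx2, hwx⟩ := exists_natCast_sub_one_of_walk h0 hw
  have h2 : 2 ≤ 2 ^ l := Nat.le_self_pow (by omega) 2
  have hx : ((x : ℕ) : ZMod m) = ((1 : ℕ) : ZMod m) := by
    rw [Nat.cast_one, ← sub_eq_zero, ← hwx, hl0]
  have hdvd : m ∣ x - 1 :=
    (Nat.modEq_iff_dvd' (by omega)).mp ((ZMod.natCast_eq_natCast_iff _ _ _).mp hx).symm
  have := Nat.le_of_dvd (by omega) hdvd
  omega

end GStep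

def binaryWalk (m N l : ℕ) (i : ℕ) : ZMod m := ((N / 2 ^ (l - i) : ℕ) : ZMod m) - 1

namespace binaryWalk

variable {m N l : ℕ}

theorem gStep {i : ℕ} (hi : i < l) :
    GStep m (binaryWalk m N l i) (binaryWalk m N l (i + 1)) := by
  have h : N / 2 ^ (l - i) = N / 2 ^ (l - (i + 1)) / 2 := by
    rw [Nat.div_div_eq_div_mul, ← pow_succ]; congr 2; omega
  rw [binaryWalk, binaryWalk, h]
  exact GStep.natCast_div_two_sub_one _

theorem apply_zero (h1 : 2 ^ l ≤ N) (h2 : N < 2 ^ (l + 1)) : binaryWalk m N l 0 = 0 := by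
  have : N / 2 ^ l = 1 := Nat.div_eq_of_lt_le (by omega) (by rw [pow_succ] at h2; omega)
  simp [binaryWalk, this]

theorem apply_self : binaryWalk m N l l = (N : ZMod m) - 1 := by
  simp [binaryWalk]

end binaryWalk

theorem natCast_mul_two_pow_add_one_div_ne_one {m : ℕ} (hm : 2 ≤ m) {r j : ℕ} (hj : 1 ≤ j)
    (hN : 2 ^ (j + 1) ≤ m * 2 ^ r + 1) : (((m * 2 ^ r + 1) / 2 ^ j : ℕ) : ZMod m) ≠ 1 := by
  have : Fact (1 < m) := ⟨hm⟩
  rcases le_or_gt j r with hjr | hrj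
  · have hdiv : (m * 2 ^ r + 1) / 2 ^ j = m * 2 ^ (r - j) := by
      rw [show m * 2 ^ r = 2 ^ j * (m * 2 ^ (r - j)) by
          rw [mul_left_comm, ← pow_add, Nat.add_sub_cancel' hjr],
        Nat.mul_add_div (by positivity), Nat.div_eq_of_lt (Nat.one_lt_two_pow (by omega)),
        add_zero]
    rw [hdiv, Nat.cast_mul, ZMod.natCast_self, zero_mul]
    exact zero_ne_one
  · have hp2 : 2 ≤ (m * 2 ^ r + 1) / 2 ^ j :=
      (Nat.le_div_iff_mul_le (by positivity)).2 (by rw [pow_succ] at hN; linarith)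
    have hpm : (m * 2 ^ r + 1) / 2 ^ j < m := by
      refine lt_of_le_of_lt (Nat.div_le_div_left (Nat.pow_le_pow_right two_pos hrj)
        (by positivity)) ((Nat.div_lt_iff_lt_mul (by positivity)).2 ?_)
      have : 1 ≤ 2 ^ r := Nat.one_le_two_pow
      rw [pow_succ]; nlinarith
    intro h
    have := congrArg ZMod.val h
    rw [ZMod.val_natCast_of_lt hpm, ZMod.val_one] at this
    omega

theorem exists_closed_walk_of_mul_two_pow {m l r : ℕ} (hm : 2 ≤ m) (h1 : 2 ^ l ≤ m * 2 ^ r)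
    (h2 : m * 2 ^ r + 2 ≤ 2 ^ (l + 1)) :
    ∃ w : ℕ → ZMod m, w 0 = 0 ∧ w l = 0 ∧ (∀ i < l, GStep m (w i) (w (i + 1))) ∧
      ∀ i, 0 < i → i < l → w i ≠ 0 := by
  refine ⟨binaryWalk m (m * 2 ^ r + 1) l, binaryWalk.apply_zero (by omega) (by omega), ?_,
    fun i hi => binaryWalk.gStep hi, fun i hi0 hil => ?_⟩
  · rw [binaryWalk.apply_self]; simp
  · rw [binaryWalk, sub_ne_zero]
    refine natCast_mul_two_pow_add_one_div_ne_one hm (by omega) ?_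
    calc 2 ^ (l - i + 1) ≤ 2 ^ l := Nat.pow_le_pow_right two_pos (by omega)
      _ ≤ m * 2 ^ r + 1 := by omega

theorem exists_two_pow_le_mul_two_pow {m L : ℕ} (hL1 : 2 ^ (L + 1) - 1 ≤ m)
    (hL2 : m ≤ 2 ^ (L + 2) - 2) {l : ℕ} (hl : L + 1 ≤ l) :
    ∃ r, 2 ^ l ≤ m * 2 ^ r ∧ m * 2 ^ r + 2 ≤ 2 ^ (l + 1) := by
  induction l, hl using Nat.le_induction with
  | base =>
    have hpow : 2 ^ (L + 2) = 2 * 2 ^ (L + 1) := by ring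
    have : 1 ≤ 2 ^ (L + 1) := Nat.one_le_two_pow
    by_cases h : 2 ^ (L + 1) ≤ m
    · exact ⟨0, by omega, by omega⟩
    · exact ⟨1, by omega, by omega⟩
  | succ l _ ih =>
    obtain ⟨r, h1, h2⟩ := ih
    have hpow : 2 ^ (l + 1) = 2 ^ l * 2 := pow_succ 2 l
    have hpow' : 2 ^ (l + 2) = 2 ^ (l + 1) * 2 := pow_succ 2 (l + 1)
    have hr : m * 2 ^ (r + 1) = m * 2 ^ r * 2 := by ring
    exact ⟨r + 1, by omega, by omega⟩

theorem closed_walks_at_zero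
    (m L : ℕ) (hm : 3 ≤ m)
    (hL1 : 2 ^ (L + 1) - 1 ≤ m) (hL2 : m ≤ 2 ^ (L + 2) - 2) :
    (∀ (l : ℕ) (w : ℕ → ZMod m), 1 ≤ l →
        w 0 = 0 → w l = 0 →
        (∀ i < l, GStep m (w i) (w (i + 1))) →
        (∀ i, 0 < i → i < l → w i ≠ 0) →
        L + 1 ≤ l) ∧
    ∀ l : ℕ, L + 1 ≤ l →
      ∃ w : ℕ → ZMod m,
        w 0 = 0 ∧ w l = 0 ∧
        (∀ i < l, GStep m (w i) (w (i + 1))) ∧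
        (∀ i, 0 < i → i < l → w i ≠ 0) := by
  constructor
  · intro l w hl h0 hl0 hw _
    have hlt : 2 ^ (L + 1) < 2 ^ (l + 1) := by
      have := GStep.add_two_le_two_pow_of_closed_walk hl h0 hl0 hw
      omega
    have := (Nat.pow_lt_pow_iff_right (by norm_num : 1 < 2)).mp hlt
    omega
  · intro l hl
    obtain ⟨r, h1, h2⟩ := exists_two_pow_le_mul_two_pow hL1 hL2 hl
    exact exists_closed_walk_of_mul_two_pow (by omega) h1 h2
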